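/- arXiv:2205.07676 — 3 statements merged into one kernel-verified Lean document; each statement's English description precedes it below -/
import Mathlib

section
/- Let L be continuous and uniformly superlinear and w continuous with w(x) ≥ -α|x| + β. Then for each K ∈ ℕ the discrete action L_w^K : (ℝ^d)^K → ℝ attains its infimum: there exists ȳ ∈ (ℝ^d)^K with L_w^K(ȳ) = inf_{y ∈ (ℝ^d)^K} L_w^K(y). -/
/-!
Parametrize the admissible curves by their first `K` points `v : Fin K → E`. The action is then a
continuous function of `v`, and it is coercive: with `a = α + 1` in the superlinearity bound, the
kinetic part dominates `(α + 1) · ∑ ‖y_{k+1} - y_k‖`, a total variation that bounds every `‖y_j‖`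
by `‖x‖ + ∑ ‖y_{k+1} - y_k‖` and so absorbs the linear negative part `-α ‖y_0‖` of `w`.
A continuous coercive function on a finite-dimensional space attains its minimum.
-/

open Filter Finset

section Extend

variable {α : Type*} {K : ℕ}

def extendByConst (x : α) (v : Fin K → α) (k : ℕ) : α :=
  if hk : k < K then v ⟨k, hk⟩ else x

@[simp]
lemma extendByConst_self (x : α) (v : Fin K → α) : extendByConst x v K = x :=
  dif_neg (lt_irrefl K)

lemma extendByConst_restrict {x : α} {y : ℕ → α} (hy : y K = x) {k : ℕ} (hk : k ≤ K) :
    extendByConst x (fun i : Fin K => y i) k = y k := by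
  rcases hk.lt_or_eq with hk | rfl
  · simp [extendByConst, hk]
  · simp [hy]

lemma continuous_extendByConst_apply [TopologicalSpace α] (x : α) (k : ℕ) :
    Continuous fun v : Fin K → α => extendByConst x v k := by
  by_cases hk : k < K
  · simpa [extendByConst, hk] using continuous_apply (⟨k, hk⟩ : Fin K)
  · simpa [extendByConst, hk] using continuous_const

end Extend

lemma norm_le_norm_add_sum_norm_sub {E : Type*} [SeminormedAddCommGroup E] (y : ℕ → E) {j K : ℕ}
    (hj : j ≤ K) :
    ‖y j‖ ≤ ‖y K‖ + ∑ k ∈ range K, ‖y (k + 1) - y k‖ := by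
  have hvar : ‖y K - y j‖ ≤ ∑ k ∈ range K, ‖y (k + 1) - y k‖ :=
    calc ‖y K - y j‖ ≤ ∑ k ∈ Ico j K, ‖y (k + 1) - y k‖ := by
          simpa only [dist_eq_norm'] using dist_le_Ico_sum_dist y hj
      _ ≤ ∑ k ∈ range K, ‖y (k + 1) - y k‖ :=
          sum_le_sum_of_subset_of_nonneg (fun k hk => mem_range.2 (mem_Ico.1 hk).2)
            fun _ _ _ => norm_nonneg _
  linarith [norm_le_norm_add_norm_sub (y K) (y j)]

section DiscreteAction

variable {E : Type*} [NormedAddCommGroup E] [NormedSpace ℝ E]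

noncomputable def discreteAction (L : E → ℝ → E → ℝ) (w : E → ℝ) (h : ℝ) (K : ℕ) (y : ℕ → E) :
    ℝ :=
  (∑ k ∈ range K, L (y k) (h * k) (h⁻¹ • (y (k + 1) - y k)) * h) + w (y 0)

variable {L : E → ℝ → E → ℝ} {w : E → ℝ} {h : ℝ} {K : ℕ}

lemma discreteAction_congr {y z : ℕ → E} (hyz : ∀ k ≤ K, y k = z k) :
    discreteAction L w h K y = discreteAction L w h K z := by
  unfold discreteAction
  congr 1
  · refine sum_congr rfl fun k hk => ?_
    rw [mem_range] at hk
    rw [hyz k hk.le, hyz (k + 1) hk]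
  · rw [hyz 0 K.zero_le]

lemma continuous_discreteAction_extendByConst
    (hL : Continuous fun q : E × ℝ × E => L q.1 q.2.1 q.2.2) (hw : Continuous w) (x : E) :
    Continuous fun v : Fin K → E => discreteAction L w h K (extendByConst x v) := by
  have hy := continuous_extendByConst_apply (K := K) x
  refine (continuous_finsetSum _ fun k _ => ?_).add (hw.comp (hy 0))
  exact (hL.comp ((hy k).prodMk (continuous_const.prodMk
    (((hy (k + 1)).sub (hy k)).const_smul h⁻¹)))).mul continuous_const

lemma le_lagrangian_mul_step {a c : ℝ} (hc : ∀ z s ξ, a * ‖ξ‖ + c ≤ L z s ξ) (hh : 0 < h)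
    (z : E) (s : ℝ) (Δ : E) : a * ‖Δ‖ + c * h ≤ L z s (h⁻¹ • Δ) * h := by
  have hξ : a * ‖h⁻¹ • Δ‖ + c ≤ L z s (h⁻¹ • Δ) := hc z s (h⁻¹ • Δ)
  rw [norm_smul, Real.norm_eq_abs, abs_of_pos (inv_pos.2 hh)] at hξ
  calc a * ‖Δ‖ + c * h = (a * (h⁻¹ * ‖Δ‖) + c) * h := by field_simp
    _ ≤ L z s (h⁻¹ • Δ) * h := mul_le_mul_of_nonneg_right hξ hh.le

lemma norm_add_le_discreteAction {α β c : ℝ} (hh : 0 < h) (hα : 0 ≤ α)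
    (hw : ∀ z, w z ≥ -α * ‖z‖ + β) (hc : ∀ z s ξ, (α + 1) * ‖ξ‖ + c ≤ L z s ξ)
    (y : ℕ → E) {j : ℕ} (hj : j ≤ K) :
    ‖y j‖ + (K * (c * h) - (α + 1) * ‖y K‖ + β) ≤ discreteAction L w h K y := by
  set S := ∑ k ∈ range K, ‖y (k + 1) - y k‖
  have hkin : (α + 1) * S + K * (c * h) ≤
      ∑ k ∈ range K, L (y k) (h * k) (h⁻¹ • (y (k + 1) - y k)) * h := by
    calc (α + 1) * S + K * (c * h) = ∑ k ∈ range K, ((α + 1) * ‖y (k + 1) - y k‖ + c * h) := by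
          rw [sum_add_distrib, ← mul_sum, sum_const, card_range, nsmul_eq_mul]
      _ ≤ _ := sum_le_sum fun k _ => le_lagrangian_mul_step hc hh _ _ _
  have hj' := norm_le_norm_add_sum_norm_sub y hj
  have h0 := norm_le_norm_add_sum_norm_sub y K.zero_le
  have hw0 : -α * (‖y K‖ + S) + β ≤ w (y 0) := by
    linarith [hw (y 0), mul_le_mul_of_nonneg_left h0 hα]
  unfold discreteAction
  linarith

lemma tendsto_discreteAction_extendByConst_cocompact [ProperSpace E] {α β c : ℝ} (hh : 0 < h)
    (hα : 0 ≤ α) (hw : ∀ z, w z ≥ -α * ‖z‖ + β) (hc : ∀ z s ξ, (α + 1) * ‖ξ‖ + c ≤ L z s ξ)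
    (x : E) :
    Tendsto (fun v : Fin K → E => discreteAction L w h K (extendByConst x v))
      (cocompact _) atTop := by
  set C := K * (c * h) - (α + 1) * ‖x‖ + β
  have hbound : ∀ v : Fin K → E, ‖v‖ + C ≤ discreteAction L w h K (extendByConst x v) := by
    intro v
    have hpt (j : ℕ) (hj : j ≤ K) : ‖extendByConst x v j‖ + C ≤
        discreteAction L w h K (extendByConst x v) := by
      simpa using norm_add_le_discreteAction hh hα hw hc (extendByConst x v) hj
    have hv : ‖v‖ ≤ discreteAction L w h K (extendByConst x v) - C := by
      refine (pi_norm_le_iff_of_nonneg ?_).2 fun i => ?_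
      · linarith [hpt 0 K.zero_le, norm_nonneg (extendByConst x v 0)]
      · have hi := hpt i i.2.le
        simp only [extendByConst, i.2, dif_pos] at hi
        linarith
    linarith
  exact tendsto_atTop_mono hbound <| tendsto_atTop_add_const_right _ _ tendsto_norm_cocompact_atTop

theorem exists_forall_discreteAction_le [ProperSpace E] {α β c : ℝ}
    (hL : Continuous fun q : E × ℝ × E => L q.1 q.2.1 q.2.2) (hwc : Continuous w) (hh : 0 < h)
    (hα : 0 ≤ α) (hw : ∀ z, w z ≥ -α * ‖z‖ + β) (hc : ∀ z s ξ, (α + 1) * ‖ξ‖ + c ≤ L z s ξ)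
    (x : E) :
    ∃ ybar : ℕ → E, ybar K = x ∧
      ∀ y : ℕ → E, y K = x → discreteAction L w h K ybar ≤ discreteAction L w h K y := by
  obtain ⟨v, hv⟩ := (continuous_discreteAction_extendByConst hL hwc x).exists_forall_le
    (tendsto_discreteAction_extendByConst_cocompact hh hα hw hc x)
  refine ⟨extendByConst x v, extendByConst_self x v, fun y hy => ?_⟩
  calc discreteAction L w h K (extendByConst x v)
      ≤ discreteAction L w h K (extendByConst x fun i : Fin K => y i) := hv _
    _ = discreteAction L w h K y := discreteAction_congr fun k hk => extendByConst_restrict hy hk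

end DiscreteAction

/-- The discrete action `L_w^K` attains its infimum over all discrete curves
with endpoint `y K = x`, when `L` is continuous and uniformly superlinear and
`w` is continuous with `w x ≥ -α‖x‖ + β`. -/
theorem discrete_action_attains_min (d : ℕ) (t : ℝ) (ht : 0 < t)
    (L : EuclideanSpace ℝ (Fin d) → ℝ → EuclideanSpace ℝ (Fin d) → ℝ)
    (hLcont : Continuous fun q : EuclideanSpace ℝ (Fin d) × ℝ × EuclideanSpace ℝ (Fin d) =>
      L q.1 q.2.1 q.2.2)
    (hsuper : ∀ a : ℝ, 0 ≤ a → ∃ c : ℝ, ∀ x s ξ, L x s ξ ≥ a * ‖ξ‖ + c)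
    (w : EuclideanSpace ℝ (Fin d) → ℝ) (hwcont : Continuous w)
    (α β : ℝ) (hα : 0 ≤ α)
    (hw : ∀ x, w x ≥ -α * ‖x‖ + β)
    (K : ℕ) (hK : 0 < K) (x : EuclideanSpace ℝ (Fin d)) :
    ∃ ybar : ℕ → EuclideanSpace ℝ (Fin d), ybar K = x ∧
      ∀ y : ℕ → EuclideanSpace ℝ (Fin d), y K = x →
        (∑ k ∈ Finset.range K,
            L (ybar k) ((t / K) * k) ((t / K)⁻¹ • (ybar (k + 1) - ybar k)) * (t / K))
          + w (ybar 0)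
        ≤ (∑ k ∈ Finset.range K,
            L (y k) ((t / K) * k) ((t / K)⁻¹ • (y (k + 1) - y k)) * (t / K))
          + w (y 0) := by
  obtain ⟨c, hc⟩ := hsuper (α + 1) (by linarith)
  have hh : 0 < t / K := div_pos ht (Nat.cast_pos.2 hK)
  exact exists_forall_discreteAction_le hLcont hwcont hh hα hw hc x
end

section
/- Transfer of minimality from piecewise-C¹ to Lipschitz: let L be continuous, w continuous, and suppose γ* is a C² curve with γ*(t) = x that minimizes L_w over all continuous piecewise-C¹ curves γ : [0,t] → ℝ^d with γ(t) = x. Then γ* minimizes L_w over all Lipschitz curves γ : [0,t] → ℝ^d with γ(t) = x, i.e., L_w(γ*) ≤ L_w(γ) for every such Lipschitz γ. -/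
open MeasureTheory intervalIntegral

/-!
Approximate a Lipschitz curve `γ` by its polygonal interpolants `Pₙ` on the grids
`(t / (n + 1)) ℤ`. Each `Pₙ` is piecewise `C¹`, has the endpoints of `γ` and the Lipschitz
constant `M` of `γ`, and `Pₙ → γ` pointwise. Off the countable set of grid points `Pₙ'(s)` is
the slope of a chord of `γ` over a cell containing `s`, so `Pₙ'(s) → γ'(s)` wherever `γ` is
differentiable, i.e. almost everywhere by Rademacher's theorem. The triples `(Pₙ(s), s, Pₙ'(s))`
stay in a fixed compact set on which `L` is bounded, so dominated convergence gives
`L_w(Pₙ) → L_w(γ)`, and `L_w(γ*) ≤ L_w(Pₙ)` passes to the limit.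
-/

/-- `γ : ℝ → ℝ^d` is continuous and piecewise `C¹` on `[0,t]`: there is a
finite partition `0 = τ_0 < τ_1 < ⋯ < τ_m = t` such that `γ` is `C¹` on each
subinterval `[τ_{l-1}, τ_l]`. -/
def IsPiecewiseC1 (d : ℕ) (t : ℝ) (γ : ℝ → EuclideanSpace ℝ (Fin d)) : Prop :=
  Continuous γ ∧ ∃ (m : ℕ) (τ : ℕ → ℝ), 0 < m ∧ τ 0 = 0 ∧ τ m = t ∧
    (∀ l < m, τ l < τ (l + 1)) ∧
    ∀ l < m, ContDiffOn ℝ 1 γ (Set.Icc (τ l) (τ (l + 1)))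

open Filter Set Topology
open scoped NNReal

section GridLipschitz

variable {α : Type*} [PseudoMetricSpace α] {f : ℝ → α} {K : ℝ≥0}

theorem LipschitzOnWith.Icc_union_Icc {a b c : ℝ} (hab : LipschitzOnWith K f (Icc a b))
    (hbc : LipschitzOnWith K f (Icc b c)) : LipschitzOnWith K f (Icc a c) := by
  have key : ∀ x ∈ Icc a c, ∀ y ∈ Icc a c, x ≤ y → dist (f x) (f y) ≤ K * dist x y := by
    intro x hx y hy hxy
    rcases le_total y b with hyb | hby
    · exact hab.dist_le_mul x ⟨hx.1, hxy.trans hyb⟩ y ⟨hx.1.trans hxy, hyb⟩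
    rcases le_total b x with hbx | hxb
    · exact hbc.dist_le_mul x ⟨hbx, hxy.trans hy.2⟩ y ⟨hby, hy.2⟩
    calc dist (f x) (f y) ≤ dist (f x) (f b) + dist (f b) (f y) := dist_triangle _ _ _
      _ ≤ K * dist x b + K * dist b y :=
          add_le_add (hab.dist_le_mul x ⟨hx.1, hxb⟩ b ⟨hx.1.trans hxb, le_rfl⟩)
            (hbc.dist_le_mul b ⟨le_rfl, hby.trans hy.2⟩ y ⟨hby, hy.2⟩)
      _ = K * dist x y := by
          rw [Real.dist_eq, Real.dist_eq, Real.dist_eq, abs_of_nonpos (by linarith),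
            abs_of_nonpos (by linarith), abs_of_nonpos (by linarith)]
          ring
  refine LipschitzOnWith.of_dist_le_mul fun x hx y hy => ?_
  rcases le_total x y with hxy | hyx
  · exact key x hx y hy hxy
  · rw [dist_comm, dist_comm x]
    exact key y hy x hx hyx

theorem lipschitzWith_of_lipschitzOnWith_grid {h : ℝ} (hh : 0 < h)
    (hf : ∀ k : ℤ, LipschitzOnWith K f (Icc (h * k) (h * (k + 1)))) : LipschitzWith K f := by
  have hblock : ∀ (m : ℤ) (n : ℕ), LipschitzOnWith K f (Icc (h * m) (h * (m + n + 1))) := by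
    intro m n
    induction n with
    | zero => simpa using hf m
    | succ n ih =>
      simpa [add_assoc] using ih.Icc_union_Icc (by simpa [add_assoc] using hf (m + n + 1))
  rw [← lipschitzOnWith_univ]
  refine LipschitzOnWith.of_dist_le_mul fun x _ y _ => ?_
  obtain ⟨N, hN⟩ := exists_nat_ge ((|x| + |y|) / h)
  rw [div_le_iff₀ hh] at hN
  have hcover : ∀ z, |z| ≤ N * h →
      z ∈ Icc (h * ((-N : ℤ) : ℝ)) (h * ((-N : ℤ) + (2 * N : ℕ) + 1)) := by
    intro z hz
    rw [abs_le] at hz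
    push_cast
    constructor <;> nlinarith
  exact (hblock (-N) (2 * N)).dist_le_mul x (hcover x (by linarith [abs_nonneg y]))
    y (hcover y (by linarith [abs_nonneg x]))

end GridLipschitz

theorem HasDerivAt.tendsto_slope_of_le_of_le {E : Type*} [NormedAddCommGroup E] [NormedSpace ℝ E]
    {ι : Type*} {l : Filter ι} {f : ℝ → E} {f' : E} {s : ℝ} (hf : HasDerivAt f f' s)
    {a b : ι → ℝ} (ha : Tendsto a l (𝓝 s)) (hb : Tendsto b l (𝓝 s)) (has : ∀ i, a i ≤ s)
    (hsb : ∀ i, s ≤ b i) (hab : ∀ i, a i < b i) :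
    Tendsto (fun i => slope f (a i) (b i)) l (𝓝 f') := by
  set r : ℝ → E := fun y => f y - f s - (y - s) • f'
  have hr : r =o[𝓝 s] fun y => y - s := hf.isLittleO
  have hlen : ∀ i, |b i - a i| = b i - a i := fun i => abs_of_pos (sub_pos.2 (hab i))
  have hra : (fun i => r (a i)) =o[l] fun i => b i - a i :=
    (hr.comp_tendsto ha).trans_isBigO <| Asymptotics.IsBigO.of_bound 1 <| Eventually.of_forall
      fun i => by
        simp only [Function.comp_apply, Real.norm_eq_abs, one_mul, hlen,
          abs_of_nonpos (sub_nonpos.2 (has i))]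
        linarith [hsb i]
  have hrb : (fun i => r (b i)) =o[l] fun i => b i - a i :=
    (hr.comp_tendsto hb).trans_isBigO <| Asymptotics.IsBigO.of_bound 1 <| Eventually.of_forall
      fun i => by
        simp only [Function.comp_apply, Real.norm_eq_abs, one_mul, hlen,
          abs_of_nonneg (sub_nonneg.2 (hsb i))]
        linarith [has i]
  have hdiff : ∀ i, slope f (a i) (b i) - f' = (b i - a i)⁻¹ • (r (b i) - r (a i)) := by
    intro i
    have hr_sub : r (b i) - r (a i) = f (b i) - f (a i) - (b i - a i) • f' := by
      simp only [r, sub_smul]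
      abel
    rw [hr_sub, slope_def_module, smul_sub _ (f (b i) - f (a i)), smul_smul,
      inv_mul_cancel₀ (sub_ne_zero.2 (hab i).ne'), one_smul]
  rw [← tendsto_sub_nhds_zero_iff]
  simpa only [hdiff] using (hrb.sub hra).tendsto_inv_smul_nhds_zero

theorem LipschitzWith.norm_slope_le {E : Type*} [NormedAddCommGroup E] [NormedSpace ℝ E]
    {f : ℝ → E} {K : ℝ≥0} (hf : LipschitzWith K f) (a b : ℝ) : ‖slope f a b‖ ≤ K := by
  rcases eq_or_ne a b with rfl | hab
  · simp
  rw [slope_def_module, norm_smul, norm_inv,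
    inv_mul_le_iff₀ (norm_pos_iff.2 (sub_ne_zero.2 hab.symm)), mul_comm, ← dist_eq_norm,
    ← dist_eq_norm]
  exact hf.dist_le_mul b a

theorem Int.floor_div_eq_of_mem_Ico {h : ℝ} (hh : 0 < h) {k : ℤ} {u : ℝ}
    (hu : u ∈ Ico (h * k) (h * (k + 1))) : ⌊u / h⌋ = k := by
  rw [Int.floor_eq_iff, le_div_iff₀ hh, div_lt_iff₀ hh, mul_comm _ h, mul_comm _ h]
  exact hu

theorem mem_Ico_floor_div {h : ℝ} (hh : 0 < h) (s : ℝ) :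
    s ∈ Ico (h * ⌊s / h⌋) (h * (⌊s / h⌋ + 1)) := by
  rw [mem_Ico, mul_comm, ← le_div_iff₀ hh, mul_comm, ← div_lt_iff₀ hh]
  exact ⟨Int.floor_le _, Int.lt_floor_add_one _⟩

section Polygonal

variable {E : Type*} [NormedAddCommGroup E] [NormedSpace ℝ E] {γ : ℝ → E} {h : ℝ} {M : ℝ≥0}

noncomputable def gridChord (γ : ℝ → E) (h : ℝ) (k : ℤ) (u : ℝ) : E :=
  γ (h * k) + (u - h * k) • slope γ (h * k) (h * (k + 1))

noncomputable def polygonalInterp (γ : ℝ → E) (h s : ℝ) : E :=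
  gridChord γ h ⌊s / h⌋ s

@[simp]
theorem gridChord_left (k : ℤ) : gridChord γ h k (h * k) = γ (h * k) := by
  simp [gridChord]

theorem gridChord_right (k : ℤ) : gridChord γ h k (h * (k + 1)) = γ (h * (k + 1)) := by
  rw [gridChord, sub_smul_slope, vsub_eq_sub, add_sub_cancel]

theorem hasDerivAt_gridChord (k : ℤ) (u : ℝ) :
    HasDerivAt (gridChord γ h k) (slope γ (h * k) (h * (k + 1))) u := by
  convert (((hasDerivAt_id u).sub_const (h * k)).smul_const
    (slope γ (h * k) (h * (k + 1)))).const_add (γ (h * k)) using 1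
  · rfl
  · rw [one_smul]

theorem contDiff_gridChord (k : ℤ) : ContDiff ℝ 1 (gridChord γ h k) := by
  unfold gridChord
  fun_prop

theorem lipschitzWith_gridChord (hγ : LipschitzWith M γ) (k : ℤ) :
    LipschitzWith M (gridChord γ h k) := by
  refine LipschitzWith.of_dist_le_mul fun u v => ?_
  rw [dist_eq_norm, gridChord, gridChord, add_sub_add_left_eq_sub, ← sub_smul,
    sub_sub_sub_cancel_right, norm_smul, mul_comm, ← dist_eq_norm]
  gcongr
  exact hγ.norm_slope_le _ _

theorem polygonalInterp_eq_gridChord (hh : 0 < h) {k : ℤ} {u : ℝ}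
    (hu : u ∈ Icc (h * k) (h * (k + 1))) : polygonalInterp γ h u = gridChord γ h k u := by
  rcases hu.2.lt_or_eq with hlt | rfl
  · rw [polygonalInterp, Int.floor_div_eq_of_mem_Ico hh ⟨hu.1, hlt⟩]
  · have hfloor : ⌊h * (k + 1) / h⌋ = k + 1 := by
      rw [mul_div_cancel_left₀ _ hh.ne']
      exact_mod_cast Int.floor_intCast (k + 1)
    rw [polygonalInterp, hfloor, gridChord_right]
    exact_mod_cast gridChord_left (k + 1)

theorem polygonalInterp_mul_intCast (hh : 0 < h) (k : ℤ) :
    polygonalInterp γ h (h * k) = γ (h * k) := by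
  rw [polygonalInterp_eq_gridChord hh ⟨le_rfl, by nlinarith⟩, gridChord_left]

theorem contDiffOn_polygonalInterp (hh : 0 < h) (k : ℤ) :
    ContDiffOn ℝ 1 (polygonalInterp γ h) (Icc (h * k) (h * (k + 1))) :=
  (contDiff_gridChord k).contDiffOn.congr fun _ hu => polygonalInterp_eq_gridChord hh hu

theorem deriv_polygonalInterp (hh : 0 < h) {s : ℝ} (hs : ∀ k : ℤ, h * k ≠ s) :
    deriv (polygonalInterp γ h) s = slope γ (h * ⌊s / h⌋) (h * (⌊s / h⌋ + 1)) := by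
  have hcell : s ∈ Ioo (h * ⌊s / h⌋) (h * (⌊s / h⌋ + 1)) :=
    ⟨(mem_Ico_floor_div hh s).1.lt_of_ne (hs _), (mem_Ico_floor_div hh s).2⟩
  have hloc : polygonalInterp γ h =ᶠ[𝓝 s] gridChord γ h ⌊s / h⌋ :=
    eventually_of_mem (isOpen_Ioo.mem_nhds hcell) fun u hu =>
      polygonalInterp_eq_gridChord hh (Ioo_subset_Icc_self hu)
  rw [hloc.deriv_eq, (hasDerivAt_gridChord _ s).deriv]

theorem lipschitzWith_polygonalInterp (hγ : LipschitzWith M γ) (hh : 0 < h) :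
    LipschitzWith M (polygonalInterp γ h) :=
  lipschitzWith_of_lipschitzOnWith_grid hh fun k u hu v hv => by
    rw [polygonalInterp_eq_gridChord hh hu, polygonalInterp_eq_gridChord hh hv]
    exact lipschitzWith_gridChord hγ k u v

theorem dist_polygonalInterp_le (hγ : LipschitzWith M γ) (hh : 0 < h) (s : ℝ) :
    dist (polygonalInterp γ h s) (γ s) ≤ 2 * M * h := by
  set a := h * ⌊s / h⌋
  have hsa : dist s a ≤ h := by
    have := mem_Ico_floor_div hh s
    rw [Real.dist_eq, abs_of_nonneg (by linarith [this.1])]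
    linarith [this.2]
  calc dist (polygonalInterp γ h s) (γ s)
      ≤ dist (polygonalInterp γ h s) (polygonalInterp γ h a) + dist (γ a) (γ s) := by
        rw [polygonalInterp_mul_intCast hh]
        exact dist_triangle _ _ _
    _ ≤ M * dist s a + M * dist a s :=
        add_le_add ((lipschitzWith_polygonalInterp hγ hh).dist_le_mul _ _) (hγ.dist_le_mul _ _)
    _ ≤ 2 * M * h := by
        rw [dist_comm a]
        nlinarith [M.2]

end Polygonal

section Convergence

variable {E : Type*} [NormedAddCommGroup E] [NormedSpace ℝ E] {γ : ℝ → E} {h : ℕ → ℝ}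

theorem ae_tendsto_deriv_polygonalInterp (hh : ∀ n, 0 < h n) (h0 : Tendsto h atTop (𝓝 0))
    (hγ : ∀ᵐ s, DifferentiableAt ℝ γ s) :
    ∀ᵐ s, Tendsto (fun n => deriv (polygonalInterp γ (h n)) s) atTop (𝓝 (deriv γ s)) := by
  have hgrid : ∀ᵐ s : ℝ, ∀ n (k : ℤ), h n * k ≠ s := by
    have hcount : (⋃ n, range fun k : ℤ => h n * k).Countable :=
      countable_iUnion fun n => countable_range _
    filter_upwards [hcount.ae_notMem volume] with s hs n k hk
    exact hs (mem_iUnion.2 ⟨n, k, hk⟩)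
  filter_upwards [hgrid, hγ] with s hs hds
  have hcell := fun n => mem_Ico_floor_div (hh n) s
  have ha : Tendsto (fun n => h n * ⌊s / h n⌋) atTop (𝓝 s) := by
    refine tendsto_of_tendsto_of_tendsto_of_le_of_le (by simpa using tendsto_const_nhds.sub h0)
      tendsto_const_nhds (fun n => ?_) fun n => (hcell n).1
    linarith [(hcell n).2, mul_add (h n) ⌊s / h n⌋ 1]
  have hb : Tendsto (fun n => h n * (⌊s / h n⌋ + 1)) atTop (𝓝 s) := by
    refine tendsto_of_tendsto_of_tendsto_of_le_of_le tendsto_const_nhds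
      (by simpa using tendsto_const_nhds.add h0) (fun n => (hcell n).2.le) fun n => ?_
    linarith [(hcell n).1, mul_add (h n) ⌊s / h n⌋ 1]
  simp only [deriv_polygonalInterp (hh _) (hs _)]
  exact hds.hasDerivAt.tendsto_slope_of_le_of_le ha hb (fun n => (hcell n).1)
    (fun n => (hcell n).2.le) fun n => (hcell n).1.trans_lt (hcell n).2

theorem tendsto_polygonalInterp {M : ℝ≥0} (hγ : LipschitzWith M γ)
    (hh : ∀ n, 0 < h n) (h0 : Tendsto h atTop (𝓝 0)) (s : ℝ) :
    Tendsto (fun n => polygonalInterp γ (h n) s) atTop (𝓝 (γ s)) :=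
  tendsto_iff_dist_tendsto_zero.2 <| squeeze_zero (fun _ => dist_nonneg)
    (fun n => dist_polygonalInterp_le hγ (hh n) s) (by simpa using h0.const_mul (2 * (M : ℝ)))

end Convergence

theorem isPiecewiseC1_polygonalInterp {d : ℕ} {γ : ℝ → EuclideanSpace ℝ (Fin d)} {M : ℝ≥0}
    (hγ : LipschitzWith M γ) {t : ℝ} (ht : 0 < t) (n : ℕ) :
    IsPiecewiseC1 d t (polygonalInterp γ (t / (n + 1))) := by
  have hh : 0 < t / (n + 1) := by positivity
  refine ⟨(lipschitzWith_polygonalInterp hγ hh).continuous, n + 1, fun l => t / (n + 1) * l,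
    n.succ_pos, by simp, by push_cast; field_simp,
    fun l _ => mul_lt_mul_of_pos_left (by push_cast; linarith) hh, fun l _ => ?_⟩
  simpa using contDiffOn_polygonalInterp (γ := γ) hh l

theorem tendsto_intervalIntegral_lagrangian {E : Type*} [NormedAddCommGroup E] [NormedSpace ℝ E]
    [ProperSpace E] {L : E → ℝ → E → ℝ}
    (hL : Continuous fun q : E × ℝ × E => L q.1 q.2.1 q.2.2) (t : ℝ) {M : ℝ≥0} {γ : ℝ → E}
    {P : ℕ → ℝ → E} (hP : ∀ n, LipschitzWith M (P n)) (hP0 : ∀ n, P n 0 = γ 0)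
    (hPγ : ∀ᵐ s, Tendsto (fun n => P n s) atTop (𝓝 (γ s)))
    (hP' : ∀ᵐ s, Tendsto (fun n => deriv (P n) s) atTop (𝓝 (deriv γ s))) :
    Tendsto (fun n => ∫ s in 0..t, L (P n s) s (deriv (P n) s)) atTop
      (𝓝 (∫ s in 0..t, L (γ s) s (deriv γ s))) := by
  obtain ⟨C, hC⟩ := ((isCompact_closedBall (γ 0) (M * |t|)).prod
    ((isCompact_Icc (a := -|t|) (b := |t|)).prod
      (isCompact_closedBall (0 : E) M))).exists_bound_of_continuousOn hL.continuousOn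
  refine tendsto_integral_filter_of_dominated_convergence (fun _ => C)
    (Eventually.of_forall fun n => ?_) (Eventually.of_forall fun n => ?_)
    intervalIntegrable_const ?_
  · exact hL.comp_aestronglyMeasurable ((hP n).continuous.aestronglyMeasurable.prodMk
      (aestronglyMeasurable_id.prodMk (stronglyMeasurable_deriv _).aestronglyMeasurable))
  · refine Eventually.of_forall fun s hs => ?_
    have hst : |s| ≤ |t| := by simpa using abs_sub_left_of_mem_uIcc (uIoc_subset_uIcc hs)
    refine hC (P n s, s, deriv (P n) s) ⟨?_, abs_le.1 hst, ?_⟩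
    · rw [Metric.mem_closedBall, ← hP0 n]
      calc dist (P n s) (P n 0) ≤ M * dist s 0 := (hP n).dist_le_mul s 0
        _ ≤ M * |t| := by rw [Real.dist_eq, sub_zero]; gcongr
    · simpa using norm_deriv_le_of_lipschitz (hP n)
  · filter_upwards [hPγ, hP'] with s hPs hP's _
    exact (hL.tendsto _).comp (hPs.prodMk_nhds (tendsto_const_nhds.prodMk_nhds hP's))

theorem minimality_transfer_to_Lipschitz_general (d : ℕ) (t : ℝ) (ht : 0 < t)
    (L : EuclideanSpace ℝ (Fin d) → ℝ → EuclideanSpace ℝ (Fin d) → ℝ)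
    (hLcont : Continuous fun q : EuclideanSpace ℝ (Fin d) × ℝ × EuclideanSpace ℝ (Fin d) =>
      L q.1 q.2.1 q.2.2)
    (w : EuclideanSpace ℝ (Fin d) → ℝ)
    (x : EuclideanSpace ℝ (Fin d))
    (γstar : ℝ → EuclideanSpace ℝ (Fin d))
    (hmin : ∀ γ : ℝ → EuclideanSpace ℝ (Fin d), IsPiecewiseC1 d t γ → γ t = x →
      (∫ s in (0 : ℝ)..t, L (γstar s) s (deriv γstar s)) + w (γstar 0)
        ≤ (∫ s in (0 : ℝ)..t, L (γ s) s (deriv γ s)) + w (γ 0)) :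
    ∀ γ : ℝ → EuclideanSpace ℝ (Fin d), (∃ M : NNReal, LipschitzWith M γ) → γ t = x →
      (∫ s in (0 : ℝ)..t, L (γstar s) s (deriv γstar s)) + w (γstar 0)
        ≤ (∫ s in (0 : ℝ)..t, L (γ s) s (deriv γ s)) + w (γ 0) := by
  rintro γ ⟨M, hγ⟩ hγt
  have hh : ∀ n : ℕ, 0 < t / (n + 1) := fun n => by positivity
  have h0 : Tendsto (fun n : ℕ => t / (n + 1)) atTop (𝓝 0) := by
    simpa [div_eq_mul_inv] using tendsto_one_div_add_atTop_nhds_zero_nat.const_mul t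
  have hP0 : ∀ n : ℕ, polygonalInterp γ (t / (n + 1)) 0 = γ 0 := fun n => by
    simpa using polygonalInterp_mul_intCast (γ := γ) (hh n) 0
  have hPt : ∀ n : ℕ, polygonalInterp γ (t / (n + 1)) t = x := fun n => by
    have hnode : t / (n + 1) * ((n + 1 : ℤ) : ℝ) = t := by
      push_cast
      field_simp
    have hgrid_end := polygonalInterp_mul_intCast (γ := γ) (hh n) (n + 1)
    rwa [hnode, hγt] at hgrid_end
  have hlim := tendsto_intervalIntegral_lagrangian hLcont t
    (fun n => lipschitzWith_polygonalInterp hγ (hh n)) hP0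
    (ae_of_all _ (tendsto_polygonalInterp hγ hh h0))
    (ae_tendsto_deriv_polygonalInterp hh h0 hγ.ae_differentiableAt)
  refine ge_of_tendsto' (hlim.add_const (w (γ 0))) fun n => ?_
  rw [← hP0 n]
  exact hmin _ (isPiecewiseC1_polygonalInterp hγ ht n) (hPt n)

/-- Transfer of minimality from the piecewise-`C¹` class to the Lipschitz
class: if the `C²` curve `γ*` with `γ* t = x` minimizes the action
`L_w(γ) = ∫₀ᵗ L(γ,s,γ') ds + w(γ 0)` over all continuous piecewise-`C¹`
curves with endpoint `x`, then it also minimizes over all Lipschitz curves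
with endpoint `x`. -/
theorem minimality_transfer_to_Lipschitz (d : ℕ) (t : ℝ) (ht : 0 < t)
    (L : EuclideanSpace ℝ (Fin d) → ℝ → EuclideanSpace ℝ (Fin d) → ℝ)
    (hLcont : Continuous fun q : EuclideanSpace ℝ (Fin d) × ℝ × EuclideanSpace ℝ (Fin d) =>
      L q.1 q.2.1 q.2.2)
    (w : EuclideanSpace ℝ (Fin d) → ℝ) (hwcont : Continuous w)
    (x : EuclideanSpace ℝ (Fin d))
    (γstar : ℝ → EuclideanSpace ℝ (Fin d)) (hγstar : ContDiff ℝ 2 γstar)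
    (hγstart : γstar t = x)
    (hmin : ∀ γ : ℝ → EuclideanSpace ℝ (Fin d), IsPiecewiseC1 d t γ → γ t = x →
      (∫ s in (0 : ℝ)..t, L (γstar s) s (deriv γstar s)) + w (γstar 0)
        ≤ (∫ s in (0 : ℝ)..t, L (γ s) s (deriv γ s)) + w (γ 0)) :
    ∀ γ : ℝ → EuclideanSpace ℝ (Fin d), (∃ M : NNReal, LipschitzWith M γ) → γ t = x →
      (∫ s in (0 : ℝ)..t, L (γstar s) s (deriv γstar s)) + w (γstar 0)
        ≤ (∫ s in (0 : ℝ)..t, L (γ s) s (deriv γ s)) + w (γ 0) :=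
  minimality_transfer_to_Lipschitz_general d t ht L hLcont w x γstar hmin
end

section
/- Regularity of Lipschitz minimizers: let L satisfy (L1)–(L3) (C², positive definite ∂²L/∂ξ², uniformly superlinear in ξ). Suppose γ : [0,t] → ℝ^d is Lipschitz and there is a constant c ∈ ℝ^d such that ∂L/∂ξ(γ(s), s, γ'(s)) = c + ∫₀ˢ ∂L/∂x(γ(τ), τ, γ'(τ)) dτ for a.e. s ∈ [0,t]. Then γ is C² on [0,t] and satisfies the Euler–Lagrange equation d/ds [∂L/∂ξ(γ(s),s,γ'(s))] = ∂L/∂x(γ(s),s,γ'(s)) for all s ∈ [0,t]. -/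
/-!
Positive definiteness of `∂²L/∂ξ²` makes `ξ ↦ ∂L/∂ξ (x, s, ξ)` injective, superlinearity makes it
onto (a minimizer of `L x s - ⟪p, ·⟫` has momentum `p`), and the implicit function theorem makes
its inverse `ξ(x, s, p)` a `C¹` map. A Lipschitz `γ` is the integral of its a.e. derivative, and
the hypothesis says `γ' = ξ(γ, s, p)` a.e., where `p s = c + ∫₀ˢ ∂L/∂x` is continuous; so `γ'`
agrees a.e. with a continuous function and `γ` is `C¹`. Then `p` is `C¹`, hence so is
`ξ(γ, s, p) = γ'`, and `γ` is `C²`; differentiating `p = ∂L/∂ξ (γ, s, γ')` gives the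
Euler–Lagrange equation.
-/

open MeasureTheory intervalIntegral
open scoped RealInnerProductSpace
open InnerProductSpace Set Filter Function

section ImplicitFunction

variable {𝕜 : Type*} [RCLike 𝕜]
  {E₁ : Type*} [NormedAddCommGroup E₁] [NormedSpace 𝕜 E₁]
  {E₂ : Type*} [NormedAddCommGroup E₂] [NormedSpace 𝕜 E₂]
  {F : Type*} [NormedAddCommGroup F] [NormedSpace 𝕜 F]

theorem fderiv_comp_inr {f : E₁ × E₂ → F} {u : E₁ × E₂} (hf : DifferentiableAt 𝕜 f u) :
    fderiv 𝕜 f u ∘L .inr 𝕜 E₁ E₂ = fderiv 𝕜 (fun y => f (u.1, y)) u.2 :=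
  (hf.hasFDerivAt.comp u.2 (hasFDerivAt_prodMk_right u.1 u.2)).fderiv.symm

theorem contDiff_of_forall_apply_eq_zero_iff [CompleteSpace E₁] [CompleteSpace E₂]
    [CompleteSpace F] {f : E₁ × E₂ → F} {ψ : E₁ → E₂} {n : WithTop ℕ∞}
    (hf : ContDiff 𝕜 n f) (hn : n ≠ 0) (hψ : ∀ x y, f (x, y) = 0 ↔ y = ψ x)
    (hinv : ∀ x, (fderiv 𝕜 (fun y => f (x, y)) (ψ x)).IsInvertible) : ContDiff 𝕜 n ψ := by
  refine contDiff_iff_contDiffAt.2 fun x₀ => ?_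
  have hf₀ : ContDiffAt 𝕜 n f (x₀, ψ x₀) := hf.contDiffAt
  have hinv₀ : (fderiv 𝕜 f (x₀, ψ x₀) ∘L .inr 𝕜 E₁ E₂).IsInvertible := by
    rw [fderiv_comp_inr (hf₀.differentiableAt hn)]
    exact hinv x₀
  refine (hf₀.contDiffAt_implicitFunction hn hinv₀).congr_of_eventuallyEq ?_
  filter_upwards [hf₀.eventually_apply_implicitFunction hn hinv₀] with x hx
  exact ((hψ _ _).1 (hx.trans ((hψ _ _).2 rfl))).symm

end ImplicitFunction

section Gradient

variable {E : Type*} [NormedAddCommGroup E] [InnerProductSpace ℝ E]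

protected theorem ContDiff.gradient [CompleteSpace E] {X : Type*} [NormedAddCommGroup X]
    [NormedSpace ℝ X] {f : X → E → ℝ} {g : X → E} {m n : WithTop ℕ∞}
    (hf : ContDiff ℝ n fun p : X × E => f p.1 p.2) (hg : ContDiff ℝ m g) (hmn : m + 1 ≤ n) :
    ContDiff ℝ m fun x => gradient (f x) (g x) :=
  (toDual ℝ E).symm.contDiff.comp (hf.fderiv hg hmn)

theorem injective_of_inner_fderiv_pos {F : E → E} (hF : Differentiable ℝ F)
    (hpos : ∀ ξ v, v ≠ 0 → 0 < ⟪v, fderiv ℝ F ξ v⟫) : Injective F := by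
  intro ξ₁ ξ₂ hF₁₂
  by_contra hne
  set v := ξ₁ - ξ₂
  let φ : ℝ → ℝ := fun r => ⟪v, F (ξ₂ + r • v)⟫
  have hφ : ∀ r, HasDerivAt φ ⟪v, fderiv ℝ F (ξ₂ + r • v) v⟫ r := fun r =>
    (innerSL ℝ v).hasFDerivAt.comp_hasDerivAt r <| (hF _).hasFDerivAt.comp_hasDerivAt r <|
      by simpa using ((hasDerivAt_id r).smul_const v).const_add ξ₂
  have hφ01 : φ 0 < φ 1 :=
    strictMono_of_hasDerivAt_pos hφ (fun _ => hpos _ _ (sub_ne_zero.2 hne)) zero_lt_one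
  simp [φ, v, hF₁₂] at hφ01

theorem ContinuousLinearMap.isInvertible_of_inner_pos [FiniteDimensional ℝ E] {A : E →L[ℝ] E}
    (hA : ∀ v, v ≠ 0 → 0 < ⟪v, A v⟫) : A.IsInvertible := by
  have hinj : Injective A := by
    refine (injective_iff_map_eq_zero A).2 fun v hv => by_contra fun hne => ?_
    simpa [hv] using hA v hne
  exact ⟨(LinearEquiv.ofInjectiveEndo A.toLinearMap hinj).toContinuousLinearEquiv, rfl⟩

theorem surjective_gradient_of_superlinear [FiniteDimensional ℝ E] {f : E → ℝ}
    (hf : Differentiable ℝ f) (hsuper : ∀ a : ℝ, 0 ≤ a → ∃ c : ℝ, ∀ ξ, a * ‖ξ‖ + c ≤ f ξ) :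
    Surjective (gradient f) := by
  intro p
  obtain ⟨c, hc⟩ := hsuper (‖p‖ + 1) (by positivity)
  have hcoercive : Tendsto (fun ξ => f ξ - ⟪p, ξ⟫) (cocompact E) atTop := by
    refine tendsto_atTop_mono (fun ξ => ?_)
      (tendsto_atTop_add_const_right _ c tendsto_norm_cocompact_atTop)
    nlinarith [hc ξ, real_inner_le_norm p ξ]
  obtain ⟨ξ₀, hle⟩ :=
    (hf.continuous.sub (continuous_const.inner continuous_id)).exists_forall_le hcoercive
  have hmin : IsLocalMin (fun ξ => f ξ - ⟪p, ξ⟫) ξ₀ := Eventually.of_forall hle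
  have hcrit : fderiv ℝ f ξ₀ - innerSL ℝ p = 0 :=
    hmin.hasFDerivAt_eq_zero ((hf ξ₀).hasFDerivAt.sub (innerSL ℝ p).hasFDerivAt)
  refine ⟨ξ₀, (toDual ℝ E).symm_apply_eq.2 ?_⟩
  rw [sub_eq_zero.1 hcrit]
  ext
  simp

end Gradient

section Lagrangian

variable {E : Type*} [NormedAddCommGroup E] [InnerProductSpace ℝ E] [FiniteDimensional ℝ E]

/-- `∂L/∂ξ (x, s, ξ)` at `q = (x, s, ξ)`. -/
noncomputable def momentum (L : E → ℝ → E → ℝ) (q : E × ℝ × E) : E :=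
  gradient (L q.1 q.2.1) q.2.2

/-- `∂L/∂x (x, s, ξ)` at `q = (x, s, ξ)`. -/
noncomputable def force (L : E → ℝ → E → ℝ) (q : E × ℝ × E) : E :=
  gradient (fun z => L z q.2.1 q.2.2) q.1

/-- The paper's `ξ(x, s, p)`, inverting `ξ ↦ ∂L/∂ξ (x, s, ξ)`; a junk value where `p` has no
preimage. -/
noncomputable def velocityOfMomentum (L : E → ℝ → E → ℝ) (q : E × ℝ × E) : E :=
  Classical.epsilon fun ξ => momentum L (q.1, q.2.1, ξ) = q.2.2

variable {L : E → ℝ → E → ℝ} (hC2 : ContDiff ℝ 2 fun q : E × ℝ × E => L q.1 q.2.1 q.2.2)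
include hC2

theorem contDiff_momentum : ContDiff ℝ 1 (momentum L) :=
  ContDiff.gradient (f := fun (q : E × ℝ × E) η => L q.1 q.2.1 η) (n := 2)
    (hC2.comp (f := fun p : (E × ℝ × E) × E => (p.1.1, p.1.2.1, p.2)) (by fun_prop))
    contDiff_snd.snd (by norm_num)

theorem continuous_force : Continuous (force L) :=
  (ContDiff.gradient (f := fun (q : E × ℝ × E) z => L z q.2.1 q.2.2) (m := 0) (n := 2)
    (hC2.comp (f := fun p : (E × ℝ × E) × E => (p.2, p.1.2.1, p.1.2.2)) (by fun_prop))
    contDiff_fst (by norm_num)).continuous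

variable (hpos : ∀ (x : E) (s : ℝ) (ξ v : E),
      v ≠ 0 → 0 < ⟪v, fderiv ℝ (fun ζ => gradient (fun η => L x s η) ζ) ξ v⟫)
  (hsuper : ∀ a : ℝ, 0 ≤ a → ∃ c : ℝ, ∀ x s ξ, L x s ξ ≥ a * ‖ξ‖ + c)
include hpos hsuper

theorem momentum_eq_iff {x : E} {s : ℝ} {ξ p : E} :
    momentum L (x, s, ξ) = p ↔ ξ = velocityOfMomentum L (x, s, p) := by
  have hdiff : Differentiable ℝ fun ζ => momentum L (x, s, ζ) :=
    ((contDiff_momentum hC2).comp (by fun_prop)).differentiable one_ne_zero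
  have hsurj : ∃ ξ, momentum L (x, s, ξ) = p :=
    surjective_gradient_of_superlinear (f := L x s)
      ((hC2.comp (f := fun η : E => (x, s, η)) (by fun_prop)).differentiable two_ne_zero)
      (fun a ha => (hsuper a ha).imp fun c hc ξ => hc x s ξ) p
  constructor
  · intro hξ
    exact injective_of_inner_fderiv_pos hdiff (hpos x s)
      (hξ.trans (Classical.epsilon_spec hsurj).symm)
  · rintro rfl
    exact Classical.epsilon_spec hsurj

theorem contDiff_velocityOfMomentum : ContDiff ℝ 1 (velocityOfMomentum L) := by
  refine contDiff_of_forall_apply_eq_zero_iff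
    (f := fun u : (E × ℝ × E) × E => momentum L (u.1.1, u.1.2.1, u.2) - u.1.2.2)
    (((contDiff_momentum hC2).comp (by fun_prop)).sub (by fun_prop)) one_ne_zero
    (fun q ξ => sub_eq_zero.trans (momentum_eq_iff hC2 hpos hsuper)) fun q => ?_
  change (fderiv ℝ (fun ξ => momentum L (q.1, q.2.1, ξ) - q.2.2) _).IsInvertible
  rw [fderiv_sub_const]
  exact ContinuousLinearMap.isInvertible_of_inner_pos (hpos _ _ _)

end Lagrangian

section Curves

variable {E : Type*} [NormedAddCommGroup E] [NormedSpace ℝ E]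

theorem contDiffOn_succ_of_hasDerivWithinAt {f f' : ℝ → E} {s : Set ℝ} {n : ℕ∞}
    (hs : UniqueDiffOn ℝ s) (hf : ∀ x ∈ s, HasDerivWithinAt f (f' x) s x)
    (hf' : ContDiffOn ℝ n f' s) : ContDiffOn ℝ (n + 1) f s := by
  rw [contDiffOn_succ_iff_derivWithin hs]
  refine ⟨fun x hx => (hf x hx).differentiableWithinAt, by simp, hf'.congr fun x hx => ?_⟩
  exact (hf x hx).derivWithin (hs x hx)

theorem hasDerivWithinAt_integral_Icc_of_ae_eq [CompleteSpace E] {f k : ℝ → E} {a b s : ℝ}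
    (hk : Continuous k) (hfk : f =ᵐ[volume.restrict (Icc a b)] k) (hs : s ∈ Icc a b) :
    HasDerivWithinAt (fun u => ∫ τ in a..u, f τ) (k s) (Icc a b) s := by
  have hfk' : ∀ᵐ τ, τ ∈ Icc a b → f τ = k τ := (ae_restrict_iff' measurableSet_Icc).1 hfk
  have heq : EqOn (fun u => ∫ τ in a..u, f τ) (fun u => ∫ τ in a..u, k τ) (Icc a b) := by
    intro u hu
    have hsub : uIoc a u ⊆ Icc a b := by
      rw [uIoc_of_le hu.1]
      exact Ioc_subset_Icc_self.trans (Icc_subset_Icc le_rfl hu.2)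
    exact integral_congr_ae (hfk'.mono fun τ hτ hτu => hτ (hsub hτu))
  exact (hk.integral_hasStrictDerivAt a s).hasDerivAt.hasDerivWithinAt.congr heq (heq hs)

variable [FiniteDimensional ℝ E] {γ : ℝ → E} {K : NNReal}

theorem LipschitzWith.intervalIntegrable_comp_deriv {F : Type*} [NormedAddCommGroup F]
    (hγ : LipschitzWith K γ) {Φ : ℝ → E → F} (hΦ : Continuous (uncurry Φ)) (a b : ℝ) :
    IntervalIntegrable (fun τ => Φ τ (deriv γ τ)) volume a b := by
  obtain ⟨C, hC⟩ := ((isCompact_uIcc (a := a) (b := b)).prod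
    (isCompact_closedBall (0 : E) K)).exists_bound_of_continuousOn hΦ.continuousOn
  refine (intervalIntegrable_iff').2 <| Measure.integrableOn_of_bounded (M := C)
    measure_Icc_lt_top.ne (hΦ.comp_aestronglyMeasurable (aestronglyMeasurable_id.prodMk
      (stronglyMeasurable_deriv γ).aestronglyMeasurable)) ?_
  filter_upwards [ae_restrict_mem measurableSet_uIcc] with τ hτ
  exact hC (τ, deriv γ τ) ⟨hτ, by simpa using norm_deriv_le_of_lipschitz hγ⟩

theorem LipschitzWith.integral_deriv_eq_sub (hγ : LipschitzWith K γ) (a b : ℝ) :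
    ∫ τ in a..b, deriv γ τ = γ b - γ a := by
  refine (SeparatingDual.eq_iff_forall_dual_eq (R := ℝ)).2 fun ℓ => ?_
  have hℓγ : AbsolutelyContinuousOnInterval (ℓ ∘ γ) a b :=
    (ℓ.lipschitz.comp hγ).lipschitzOnWith.absolutelyContinuousOnInterval
  rw [← ℓ.intervalIntegral_comp_comm (hγ.intervalIntegrable_comp_deriv (Φ := fun _ v => v)
    continuous_snd a b), map_sub]
  refine (intervalIntegral.integral_congr_ae ?_).trans hℓγ.integral_deriv_eq_sub
  filter_upwards [hγ.ae_differentiableAt_real] with τ hτ _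
  exact (ℓ.hasFDerivAt.comp_hasDerivAt τ hτ.hasDerivAt).deriv.symm

theorem LipschitzWith.hasDerivWithinAt_of_deriv_ae_eq (hγ : LipschitzWith K γ) {k : ℝ → E}
    {a b s : ℝ} (hk : Continuous k) (hγk : deriv γ =ᵐ[volume.restrict (Icc a b)] k)
    (hs : s ∈ Icc a b) : HasDerivWithinAt γ (k s) (Icc a b) s := by
  have hγ_eq : γ = fun u => γ a + ∫ τ in a..u, deriv γ τ := by
    funext u
    rw [hγ.integral_deriv_eq_sub, add_sub_cancel]
  rw [hγ_eq]
  exact (hasDerivWithinAt_integral_Icc_of_ae_eq hk hγk hs).const_add _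

end Curves

/-- Regularity of Lipschitz minimizers: under (L1)–(L3), if a Lipschitz curve
`γ` satisfies the integrated Euler–Lagrange (du Bois-Reymond) equation
`∂L/∂ξ(γ s, s, γ' s) = c + ∫₀ˢ ∂L/∂x(γ τ, τ, γ' τ) dτ` for a.e. `s ∈ [0,t]`,
then `γ` is `C²` on `[0,t]` and satisfies the Euler–Lagrange equation
`d/ds [∂L/∂ξ(γ,s,γ')] = ∂L/∂x(γ,s,γ')` on `[0,t]`. -/
theorem lipschitz_minimizer_regularity (d : ℕ) (t : ℝ) (ht : 0 < t)
    (L : EuclideanSpace ℝ (Fin d) → ℝ → EuclideanSpace ℝ (Fin d) → ℝ)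
    (hC2 : ContDiff ℝ 2 fun q : EuclideanSpace ℝ (Fin d) × ℝ × EuclideanSpace ℝ (Fin d) =>
      L q.1 q.2.1 q.2.2)
    (hpos : ∀ (x : EuclideanSpace ℝ (Fin d)) (s : ℝ) (ξ v : EuclideanSpace ℝ (Fin d)),
      v ≠ 0 → 0 < ⟪v, fderiv ℝ (fun ζ => gradient (fun η => L x s η) ζ) ξ v⟫)
    (hsuper : ∀ a : ℝ, 0 ≤ a → ∃ c : ℝ, ∀ x s ξ, L x s ξ ≥ a * ‖ξ‖ + c)
    (γ : ℝ → EuclideanSpace ℝ (Fin d)) (hγLip : ∃ M : NNReal, LipschitzWith M γ)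
    (c : EuclideanSpace ℝ (Fin d))
    (hEL : ∀ᵐ s ∂(volume.restrict (Set.Icc (0 : ℝ) t)),
      gradient (fun ξ => L (γ s) s ξ) (deriv γ s)
        = c + ∫ τ in (0 : ℝ)..s, gradient (fun z => L z τ (deriv γ τ)) (γ τ)) :
    ContDiffOn ℝ 2 γ (Set.Icc (0 : ℝ) t) ∧
    ∀ s ∈ Set.Icc (0 : ℝ) t,
      HasDerivWithinAt
        (fun r => gradient (fun ξ => L (γ r) r ξ) (derivWithin γ (Set.Icc (0 : ℝ) t) r))
        (gradient (fun z => L z s (derivWithin γ (Set.Icc (0 : ℝ) t) s)) (γ s))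
        (Set.Icc (0 : ℝ) t) s := by
  obtain ⟨M, hγ⟩ := hγLip
  set I := Icc (0 : ℝ) t
  have hI : UniqueDiffOn ℝ I := uniqueDiffOn_Icc ht
  have hγc := hγ.continuous
  have hforce := continuous_force hC2
  have hvel := contDiff_velocityOfMomentum hC2 hpos hsuper
  set p := fun s => c + ∫ τ in (0 : ℝ)..s, force L (γ τ, τ, deriv γ τ)
  have hp : Continuous p := continuous_const.add <| continuous_primitive
    (hγ.intervalIntegrable_comp_deriv (Φ := fun τ ξ => force L (γ τ, τ, ξ))
      (hforce.comp (by fun_prop))) 0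
  set v := fun s => velocityOfMomentum L (γ s, s, p s)
  have hv : Continuous v := hvel.continuous.comp (by fun_prop)
  have hderiv : deriv γ =ᵐ[volume.restrict I] v :=
    hEL.mono fun s hs => (momentum_eq_iff hC2 hpos hsuper).1 hs
  have hγ' : ∀ s ∈ I, HasDerivWithinAt γ (v s) I s := fun s hs =>
    hγ.hasDerivWithinAt_of_deriv_ae_eq hv hderiv hs
  have hp' : ∀ s ∈ I, HasDerivWithinAt p (force L (γ s, s, v s)) I s := fun s hs =>
    (hasDerivWithinAt_integral_Icc_of_ae_eq (k := fun τ => force L (γ τ, τ, v τ))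
      (by fun_prop) (hderiv.mono fun τ hτ => by rw [hτ]) hs).const_add c
  have hγ1 : ContDiffOn ℝ 1 γ I :=
    contDiffOn_succ_of_hasDerivWithinAt (n := 0) hI hγ' (contDiffOn_zero.2 hv.continuousOn)
  have hp1 : ContDiffOn ℝ 1 p I :=
    contDiffOn_succ_of_hasDerivWithinAt (n := 0) hI hp' (contDiffOn_zero.2 (by fun_prop))
  have hv1 : ContDiffOn ℝ 1 v I :=
    hvel.comp_contDiffOn (hγ1.prodMk (contDiffOn_id.prodMk hp1))
  have hderivWithin : EqOn (derivWithin γ I) v I := fun s hs => (hγ' s hs).derivWithin (hI s hs)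
  refine ⟨contDiffOn_succ_of_hasDerivWithinAt (n := 1) hI hγ' hv1, fun s hs => ?_⟩
  have hmomentum : EqOn (fun r => momentum L (γ r, r, derivWithin γ I r)) p I := fun r hr => by
    simp only [hderivWithin hr, v, momentum_eq_iff hC2 hpos hsuper]
  rw [hderivWithin hs]
  exact (hp' s hs).congr hmomentum (hmomentum hs)
end
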